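/- The Bass stable rank of A(p) equals 1: for all f₁, f₂, g₁, g₂ ∈ A(p) satisfying g₁∗f₁ + g₂∗f₂ = ε, there exists h ∈ A(p) such that f₁ + h∗f₂ is invertible in A(p). -/

import Mathlib

open scoped BigOperators

/-- The complex absolute value (removed from Mathlib), with its old definition. -/
noncomputable def Complex.abs : AbsoluteValue ℂ ℝ where
  toFun x := Real.sqrt (Complex.normSq x)
  map_mul' x y := by rw [map_mul, Real.sqrt_mul (Complex.normSq_nonneg _)]
  nonneg' x := Real.sqrt_nonneg _
  eq_zero' x := by rw [Real.sqrt_eq_zero (Complex.normSq_nonneg _), Complex.normSq_eq_zero]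
  add_le' x y := by
    have h : ∀ z : ℂ, Real.sqrt (Complex.normSq z) = ‖z‖ := fun z => by
      rw [Complex.norm_def]
    simp only [h]; exact norm_add_le x y

theorem Complex.norm_eq_abs (z : ℂ) : ‖z‖ = Complex.abs z := by
  show ‖z‖ = Real.sqrt (Complex.normSq z)
  rw [Complex.norm_def]

theorem Complex.abs_ofReal (r : ℝ) : Complex.abs (r : ℂ) = |r| := by
  rw [← Complex.norm_eq_abs, Complex.norm_real, Real.norm_eq_abs]

/-- A weight: a sequence of positive reals. -/
structure GoodWeight : Type where
  p : ℕ → ℝ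
  pos : ∀ n, 0 < p n

namespace GoodWeight

/-- The growth condition `lim_{n→∞} p(n)^(1/n) = ∞`. -/
def Grows (w : GoodWeight) : Prop :=
  Filter.Tendsto (fun n : ℕ => w.p n ^ ((n : ℝ)⁻¹)) Filter.atTop Filter.atTop

/-- The Banach algebra `A(p)`, in its sequence model: a sequence `a : ℕ → ℂ` (the
Taylor coefficients at `0` of the corresponding entire function) such that
`sup_n p(n)|a(n)| < ∞`. -/
def Ap (w : GoodWeight) : Type :=
  {a : ℕ → ℂ // ∃ C : ℝ, ∀ n, w.p n * Complex.abs (a n) ≤ C}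

namespace Ap

variable {w : GoodWeight}

instance : Zero w.Ap :=
  ⟨⟨fun _ => 0, 0, fun n => by simp⟩⟩

instance : Add w.Ap :=
  ⟨fun a b =>
    ⟨fun n => a.1 n + b.1 n, by
      obtain ⟨C, hC⟩ := a.2
      obtain ⟨D, hD⟩ := b.2
      refine ⟨C + D, fun n => ?_⟩
      have h1 : Complex.abs (a.1 n + b.1 n) ≤ Complex.abs (a.1 n) + Complex.abs (b.1 n) :=
        Complex.abs.add_le _ _
      calc w.p n * Complex.abs (a.1 n + b.1 n)
          ≤ w.p n * Complex.abs (a.1 n) + w.p n * Complex.abs (b.1 n) := by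
            rw [← mul_add]; exact mul_le_mul_of_nonneg_left h1 (w.pos n).le
        _ ≤ C + D := add_le_add (hC n) (hD n)⟩⟩

instance : Neg w.Ap :=
  ⟨fun a =>
    ⟨fun n => -a.1 n, by
      obtain ⟨C, hC⟩ := a.2
      exact ⟨C, fun n => by simpa using hC n⟩⟩⟩

/-- The weighted Hadamard multiplication `(f ∗ g)(n) = p(n) f̂(n) ĝ(n)`. -/
instance : Mul w.Ap :=
  ⟨fun a b =>
    ⟨fun n => (w.p n : ℂ) * a.1 n * b.1 n, by
      obtain ⟨C, hC⟩ := a.2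
      obtain ⟨D, hD⟩ := b.2
      refine ⟨C * D, fun n => ?_⟩
      have e : w.p n * Complex.abs ((w.p n : ℂ) * a.1 n * b.1 n)
          = (w.p n * Complex.abs (a.1 n)) * (w.p n * Complex.abs (b.1 n)) := by
        rw [map_mul, map_mul, Complex.abs_ofReal, abs_of_pos (w.pos n)]; ring
      rw [e]
      have h0C : (0:ℝ) ≤ C :=
        le_trans (mul_nonneg (w.pos 0).le (Complex.abs.nonneg _)) (hC 0)
      exact mul_le_mul (hC n) (hD n) (mul_nonneg (w.pos n).le (Complex.abs.nonneg _)) h0C⟩⟩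

/-- The identity element `ε`, with coefficients `1/p(n)`. -/
noncomputable instance : One w.Ap :=
  ⟨⟨fun n => ((w.p n : ℂ))⁻¹, 1, fun n => by
      rw [map_inv₀, Complex.abs_ofReal, abs_of_pos (w.pos n),
        mul_inv_cancel₀ (w.pos n).ne']⟩⟩

instance : SMul ℂ w.Ap :=
  ⟨fun c a =>
    ⟨fun n => c * a.1 n, by
      obtain ⟨C, hC⟩ := a.2
      refine ⟨Complex.abs c * C, fun n => ?_⟩
      rw [map_mul]
      calc w.p n * (Complex.abs c * Complex.abs (a.1 n))
          = Complex.abs c * (w.p n * Complex.abs (a.1 n)) := by ring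
        _ ≤ Complex.abs c * C := mul_le_mul_of_nonneg_left (hC n) (Complex.abs.nonneg c)⟩⟩

noncomputable instance : CommRing w.Ap where
  add := (· + ·)
  add_assoc a b c := Subtype.ext (funext fun n => add_assoc _ _ _)
  zero := 0
  zero_add a := Subtype.ext (funext fun n => zero_add _)
  add_zero a := Subtype.ext (funext fun n => add_zero _)
  add_comm a b := Subtype.ext (funext fun n => add_comm _ _)
  nsmul := nsmulRec
  zsmul := zsmulRec
  mul := (· * ·)
  mul_assoc a b c := Subtype.ext (funext fun n => by
    show (w.p n : ℂ) * ((w.p n : ℂ) * a.1 n * b.1 n) * c.1 n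
        = (w.p n : ℂ) * a.1 n * ((w.p n : ℂ) * b.1 n * c.1 n)
    ring)
  one := 1
  one_mul a := Subtype.ext (funext fun n => by
    show (w.p n : ℂ) * ((w.p n : ℂ))⁻¹ * a.1 n = a.1 n
    have h : ((w.p n : ℝ) : ℂ) ≠ 0 := by exact_mod_cast (w.pos n).ne'
    rw [mul_inv_cancel₀ h, one_mul])
  mul_one a := Subtype.ext (funext fun n => by
    show (w.p n : ℂ) * a.1 n * ((w.p n : ℂ))⁻¹ = a.1 n
    have h : ((w.p n : ℝ) : ℂ) ≠ 0 := by exact_mod_cast (w.pos n).ne'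
    field_simp)
  left_distrib a b c := Subtype.ext (funext fun n => by
    show (w.p n : ℂ) * a.1 n * (b.1 n + c.1 n)
        = (w.p n : ℂ) * a.1 n * b.1 n + (w.p n : ℂ) * a.1 n * c.1 n
    ring)
  right_distrib a b c := Subtype.ext (funext fun n => by
    show (w.p n : ℂ) * (a.1 n + b.1 n) * c.1 n
        = (w.p n : ℂ) * a.1 n * c.1 n + (w.p n : ℂ) * b.1 n * c.1 n
    ring)
  zero_mul a := Subtype.ext (funext fun n => by
    show (w.p n : ℂ) * 0 * a.1 n = 0
    ring)
  mul_zero a := Subtype.ext (funext fun n => by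
    show (w.p n : ℂ) * a.1 n * 0 = 0
    ring)
  mul_comm a b := Subtype.ext (funext fun n => by
    show (w.p n : ℂ) * a.1 n * b.1 n = (w.p n : ℂ) * b.1 n * a.1 n
    ring)
  neg := Neg.neg
  neg_add_cancel a := Subtype.ext (funext fun n => neg_add_cancel _)

instance : Module ℂ w.Ap where
  smul := (· • ·)
  one_smul a := Subtype.ext (funext fun n => by
    show (1 : ℂ) * a.1 n = a.1 n
    ring)
  mul_smul c d a := Subtype.ext (funext fun n => by
    show (c * d) * a.1 n = c * (d * a.1 n)
    ring)
  smul_zero c := Subtype.ext (funext fun n => by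
    show c * 0 = 0
    ring)
  smul_add c a b := Subtype.ext (funext fun n => by
    show c * (a.1 n + b.1 n) = c * a.1 n + c * b.1 n
    ring)
  add_smul c d a := Subtype.ext (funext fun n => by
    show (c + d) * a.1 n = c * a.1 n + d * a.1 n
    ring)
  zero_smul a := Subtype.ext (funext fun n => by
    show (0 : ℂ) * a.1 n = 0
    ring)

noncomputable instance : Algebra ℂ w.Ap :=
  Algebra.ofModule
    (fun c a b => Subtype.ext (funext fun n => by
      show (w.p n : ℂ) * (c * a.1 n) * b.1 n = c * ((w.p n : ℂ) * a.1 n * b.1 n)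
      ring))
    (fun c a b => Subtype.ext (funext fun n => by
      show (w.p n : ℂ) * a.1 n * (c * b.1 n) = c * ((w.p n : ℂ) * a.1 n * b.1 n)
      ring))

theorem bddAbove (a : w.Ap) :
    BddAbove (Set.range fun n => w.p n * Complex.abs (a.1 n)) := by
  obtain ⟨C, hC⟩ := a.2
  exact ⟨C, by rintro x ⟨k, rfl⟩; exact hC k⟩

/-- The norm `‖f‖ = sup_n p(n) |f̂(n)|`, as an `AddGroupNorm`. -/
noncomputable def gnorm (w : GoodWeight) : AddGroupNorm w.Ap where
  toFun a := ⨆ n, w.p n * Complex.abs (a.1 n)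
  map_zero' := by
    have h : ∀ n : ℕ, w.p n * Complex.abs ((0 : w.Ap).1 n) = 0 := fun n => by
      show w.p n * Complex.abs 0 = 0; simp
    simp [h]
  add_le' a b := by
    apply ciSup_le
    intro n
    have h1 : Complex.abs (a.1 n + b.1 n) ≤ Complex.abs (a.1 n) + Complex.abs (b.1 n) :=
      Complex.abs.add_le _ _
    calc w.p n * Complex.abs ((a + b).1 n)
        ≤ w.p n * Complex.abs (a.1 n) + w.p n * Complex.abs (b.1 n) := by
          rw [← mul_add]; exact mul_le_mul_of_nonneg_left h1 (w.pos n).le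
      _ ≤ (⨆ k, w.p k * Complex.abs (a.1 k)) + ⨆ k, w.p k * Complex.abs (b.1 k) :=
          add_le_add (le_ciSup (bddAbove a) n) (le_ciSup (bddAbove b) n)
  neg' a := by
    have h : (fun n => w.p n * Complex.abs ((-a).1 n))
        = fun n => w.p n * Complex.abs (a.1 n) := by
      funext n
      show w.p n * Complex.abs (-a.1 n) = w.p n * Complex.abs (a.1 n)
      rw [AbsoluteValue.map_neg]
    show (⨆ n, w.p n * Complex.abs ((-a).1 n)) = ⨆ n, w.p n * Complex.abs (a.1 n)
    rw [h]
  eq_zero_of_map_eq_zero' a h := by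
    apply Subtype.ext
    funext n
    have h1 : w.p n * Complex.abs (a.1 n) ≤ 0 := h ▸ le_ciSup (bddAbove a) n
    have h2 : (0:ℝ) ≤ w.p n * Complex.abs (a.1 n) :=
      mul_nonneg (w.pos n).le (Complex.abs.nonneg _)
    have h3 : Complex.abs (a.1 n) = 0 := by
      rcases mul_eq_zero.mp (le_antisymm h1 h2) with h' | h'
      · exact absurd h' (w.pos n).ne'
      · exact h'
    exact Complex.abs.eq_zero.mp h3

noncomputable instance : NormedAddCommGroup w.Ap :=
  (gnorm w).toNormedAddCommGroup

theorem norm_def (a : w.Ap) : ‖a‖ = ⨆ n, w.p n * Complex.abs (a.1 n) := rfl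

theorem le_norm (a : w.Ap) (n : ℕ) : w.p n * Complex.abs (a.1 n) ≤ ‖a‖ :=
  le_ciSup (bddAbove a) n

theorem norm_nonneg' (a : w.Ap) : 0 ≤ ‖a‖ :=
  le_trans (mul_nonneg (w.pos 0).le (Complex.abs.nonneg _)) (le_norm a 0)

noncomputable instance : NormedCommRing w.Ap :=
  { (inferInstance : NormedAddCommGroup w.Ap), (inferInstance : CommRing w.Ap) with
    norm_mul_le := by
      intro a b
      apply ciSup_le
      intro n
      have e : w.p n * Complex.abs ((a * b).1 n)
          = (w.p n * Complex.abs (a.1 n)) * (w.p n * Complex.abs (b.1 n)) := by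
        show w.p n * Complex.abs ((w.p n : ℂ) * a.1 n * b.1 n) = _
        rw [map_mul, map_mul, Complex.abs_ofReal, abs_of_pos (w.pos n)]; ring
      rw [e]
      exact mul_le_mul (le_norm a n) (le_norm b n)
        (mul_nonneg (w.pos n).le (Complex.abs.nonneg _)) (norm_nonneg' a) }

noncomputable instance : NormedSpace ℂ w.Ap where
  norm_smul_le c a := by
    apply ciSup_le
    intro n
    have e : w.p n * Complex.abs ((c • a).1 n)
        = Complex.abs c * (w.p n * Complex.abs (a.1 n)) := by
      show w.p n * Complex.abs (c * a.1 n) = _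
      rw [map_mul]; ring
    rw [e]
    calc Complex.abs c * (w.p n * Complex.abs (a.1 n))
        ≤ Complex.abs c * ‖a‖ := mul_le_mul_of_nonneg_left (le_norm a n) (Complex.abs.nonneg c)
      _ = ‖c‖ * ‖a‖ := by rw [Complex.norm_eq_abs]

noncomputable instance : NormedAlgebra ℂ w.Ap :=
  { (inferInstance : Algebra ℂ w.Ap) with
    norm_smul_le := fun c a => norm_smul_le c a }

end Ap

end GoodWeight

/-! In the coefficients `p(n) f̂(n)` the product of `A(p)` is pointwise and the norm is the sup
norm, so `A(p)` is a copy of `ℓ^∞`, and an element is invertible as soon as these coefficients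
stay away from `0`. If `g₁ ∗ f₁ + g₂ ∗ f₂ = ε`, at each `n` one of `p(n) f̂₁(n)`, `p(n) f̂₂(n)` is
large compared with `1 / max(‖g₁‖, ‖g₂‖)`; taking the coefficient of `h` to be `0` where the first
one is large and `2` elsewhere keeps `f₁ + h ∗ f₂` uniformly away from `0`. -/

theorem one_le_mul_norm_add_norm_of_mul_add_mul_eq_one {R : Type*} [SeminormedRing R]
    [NormOneClass R] {x₁ x₂ y₁ y₂ : R} {C : ℝ} (h : y₁ * x₁ + y₂ * x₂ = 1)
    (hy₁ : ‖y₁‖ ≤ C) (hy₂ : ‖y₂‖ ≤ C) : 1 ≤ C * (‖x₁‖ + ‖x₂‖) :=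
  calc (1 : ℝ) = ‖y₁ * x₁ + y₂ * x₂‖ := by rw [h, norm_one]
    _ ≤ ‖y₁‖ * ‖x₁‖ + ‖y₂‖ * ‖x₂‖ :=
      (norm_add_le _ _).trans (add_le_add (norm_mul_le _ _) (norm_mul_le _ _))
    _ ≤ C * (‖x₁‖ + ‖x₂‖) := by
      rw [mul_add]
      gcongr

theorem le_norm_add_two_smul_of_norm_lt {E : Type*} [SeminormedAddCommGroup E]
    [NormedSpace ℝ E] {x₁ x₂ : E} {δ : ℝ} (hδ : 2 * δ ≤ ‖x₁‖ + ‖x₂‖) (hx₁ : ‖x₁‖ < δ) :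
    δ ≤ ‖x₁ + (2 : ℝ) • x₂‖ := by
  have h := norm_sub_norm_le ((2 : ℝ) • x₂) (-x₁)
  rw [norm_smul, norm_neg, sub_neg_eq_add, add_comm, Real.norm_two] at h
  linarith

namespace GoodWeight.Ap

variable {w : GoodWeight}

theorem norm_p_mul (n : ℕ) (z : ℂ) : ‖(w.p n : ℂ) * z‖ = w.p n * Complex.abs z := by
  rw [norm_mul, Complex.norm_real, Real.norm_of_nonneg (w.pos n).le, Complex.norm_eq_abs]

noncomputable def scaledCoeff : w.Ap →+* (ℕ → ℂ) where
  toFun a n := w.p n * a.1 n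
  map_one' := funext fun n => mul_inv_cancel₀ (Complex.ofReal_ne_zero.mpr (w.pos n).ne')
  map_mul' a b := funext fun n => by
    show (w.p n : ℂ) * ((w.p n : ℂ) * a.1 n * b.1 n) = w.p n * a.1 n * (w.p n * b.1 n)
    ring
  map_zero' := funext fun n => mul_zero _
  map_add' _ _ := funext fun n => mul_add _ _ _

theorem scaledCoeff_apply (a : w.Ap) (n : ℕ) : scaledCoeff a n = w.p n * a.1 n := rfl

theorem scaledCoeff_injective : Function.Injective (scaledCoeff (w := w)) := fun _ _ hab =>
  Subtype.ext <| funext fun n =>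
    mul_left_cancel₀ (Complex.ofReal_ne_zero.mpr (w.pos n).ne') (congrFun hab n)

theorem norm_scaledCoeff_le (a : w.Ap) (n : ℕ) : ‖scaledCoeff a n‖ ≤ ‖a‖ := by
  rw [scaledCoeff_apply, norm_p_mul]
  exact le_norm a n

noncomputable def ofScaledCoeff (c : ℕ → ℂ) {M : ℝ} (hc : ∀ n, ‖c n‖ ≤ M) : w.Ap :=
  ⟨fun n => c n / w.p n, M, fun n => by
    show w.p n * Complex.abs (c n / w.p n) ≤ M
    rw [← norm_p_mul, mul_div_cancel₀ _ (Complex.ofReal_ne_zero.mpr (w.pos n).ne')]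
    exact hc n⟩

@[simp]
theorem scaledCoeff_ofScaledCoeff (c : ℕ → ℂ) {M : ℝ} (hc : ∀ n, ‖c n‖ ≤ M) :
    scaledCoeff (ofScaledCoeff (w := w) c hc) = c :=
  funext fun n => mul_div_cancel₀ _ (Complex.ofReal_ne_zero.mpr (w.pos n).ne')

theorem isUnit_of_le_norm_scaledCoeff {a : w.Ap} {δ : ℝ} (hδ : 0 < δ)
    (ha : ∀ n, δ ≤ ‖scaledCoeff a n‖) : IsUnit a := by
  have hne : ∀ n, scaledCoeff a n ≠ 0 := fun n =>
    norm_pos_iff.mp (hδ.trans_le (ha n))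
  have hinv : ∀ n, ‖(scaledCoeff a n)⁻¹‖ ≤ δ⁻¹ := fun n => by
    rw [norm_inv]
    exact inv_anti₀ hδ (ha n)
  refine .of_mul_eq_one (ofScaledCoeff _ hinv) (scaledCoeff_injective ?_)
  rw [map_mul, map_one, scaledCoeff_ofScaledCoeff]
  exact funext fun n => mul_inv_cancel₀ (hne n)

end GoodWeight.Ap

open GoodWeight.Ap in
theorem bassStableRankOne_general (w : GoodWeight)
    (f₁ f₂ g₁ g₂ : w.Ap) (h : g₁ * f₁ + g₂ * f₂ = 1) :
    ∃ h' : w.Ap, IsUnit (f₁ + h' * f₂) := by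
  set C := max ‖g₁‖ ‖g₂‖
  have hcover (n : ℕ) : 1 ≤ C * (‖scaledCoeff f₁ n‖ + ‖scaledCoeff f₂ n‖) := by
    refine one_le_mul_norm_add_norm_of_mul_add_mul_eq_one (y₁ := scaledCoeff g₁ n)
      (y₂ := scaledCoeff g₂ n) ?_ ((norm_scaledCoeff_le g₁ n).trans (le_max_left _ _))
      ((norm_scaledCoeff_le g₂ n).trans (le_max_right _ _))
    simpa using congrFun (congrArg scaledCoeff h) n
  have hC : 0 < C := pos_of_mul_pos_left (one_pos.trans_le (hcover 0)) (by positivity)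
  set δ := C⁻¹ / 2
  have hδ : 0 < δ := by positivity
  let t : ℕ → ℂ := fun n => if δ ≤ ‖scaledCoeff f₁ n‖ then 0 else ((2 : ℝ) : ℂ)
  have ht (n : ℕ) : ‖t n‖ ≤ 2 := by
    by_cases hn : δ ≤ ‖scaledCoeff f₁ n‖ <;> simp [t, hn]
  refine ⟨ofScaledCoeff t ht, isUnit_of_le_norm_scaledCoeff hδ fun n => ?_⟩
  simp only [map_add, map_mul, scaledCoeff_ofScaledCoeff, Pi.add_apply, Pi.mul_apply]
  by_cases hn : δ ≤ ‖scaledCoeff f₁ n‖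
  · simp [t, hn]
  · simp only [t, hn, if_false, ← Complex.real_smul]
    refine le_norm_add_two_smul_of_norm_lt ?_ (not_le.mp hn)
    rw [mul_div_cancel₀ _ two_ne_zero, inv_le_iff_one_le_mul₀' hC]
    exact hcover n

/-- The Bass stable rank of `A(p)` is `1`: every unimodular pair is reducible. -/
theorem bassStableRankOne (w : GoodWeight) (hg : w.Grows)
    (f₁ f₂ g₁ g₂ : w.Ap) (h : g₁ * f₁ + g₂ * f₂ = 1) :
    ∃ h' : w.Ap, IsUnit (f₁ + h' * f₂) :=
  bassStableRankOne_general w f₁ f₂ g₁ g₂ h
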